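/- arXiv:1212.6885 — 2 statements merged into one kernel-verified Lean document; each statement's English description precedes it below -/
import Mathlib

section
/- For every g ∈ C³(ℝ) with bounded first, second, and third derivatives, and F_β(x) = β⁻¹ log(∑_j e^{β x_j}), the composite f = g ∘ F_β satisfies ∑_{j,k=1}^p |∂_j ∂_k f(x)| ≤ ‖g''‖_∞ + 2‖g'‖_∞ β and ∑_{j,k,l=1}^p |∂_j ∂_k ∂_l f(x)| ≤ ‖g'''‖_∞ + 6‖g''‖_∞ β + 6‖g'‖_∞ β² for all x ∈ ℝ^p. -/
/-!
Write `π = softmax β x`. Then `∂_j F_β = π_j` and `∂_j π_k = β π_k (δ_kj - π_j)`, so the partial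
derivatives of `g ∘ F_β` of order two and three are explicit polynomials in `π`, with coefficients
`g^(m)(F_β x) β^n`. As `π` is a probability vector, `∑_b |δ_ab - π_b| ≤ 2` for every `a`, and
bounding the ℓ¹ norm of these tensors term by term gives the constants `2` and `6`.
-/

open Real Finset

noncomputable section

variable {ι : Type*} [Fintype ι]

def logSumExp (β : ℝ) (x : ι → ℝ) : ℝ := β⁻¹ * log (∑ j, exp (β * x j))

def softmax (β : ℝ) (x : ι → ℝ) (k : ι) : ℝ := exp (β * x k) / ∑ j, exp (β * x j)

section SubProbability

variable {w : ι → ℝ}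

theorem sum_mul_le_of_le (h₀ : ∀ i, 0 ≤ w i) (h₁ : ∑ i, w i ≤ 1) {c : ι → ℝ} {C : ℝ}
    (hC : 0 ≤ C) (hc : ∀ i, c i ≤ C) : ∑ i, w i * c i ≤ C :=
  calc ∑ i, w i * c i ≤ ∑ i, w i * C := by gcongr with i; exacts [h₀ i, hc i]
    _ = (∑ i, w i) * C := by rw [sum_mul]
    _ ≤ C := mul_le_of_le_one_left hC h₁

theorem sum_sum_abs_add_mul_add_mul_le (X Y Z : ι → ι → ℝ) (c d : ℝ) :
    ∑ j, ∑ k, |X j k + c * Y j k + d * Z j k|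
      ≤ ∑ j, ∑ k, |X j k| + |c| * ∑ j, ∑ k, |Y j k| + |d| * ∑ j, ∑ k, |Z j k| := by
  simp only [mul_sum, ← abs_mul, ← sum_add_distrib]
  gcongr with j _ k
  exact (abs_add_le _ _).trans (add_le_add_left (abs_add_le _ _) _)

variable [DecidableEq ι]

theorem sum_abs_ite_sub_le (h₀ : ∀ i, 0 ≤ w i) (h₁ : ∑ i, w i ≤ 1) (a : ι) :
    ∑ b, |(if a = b then 1 else 0) - w b| ≤ 2 :=
  calc ∑ b, |(if a = b then 1 else 0) - w b|
      ≤ ∑ b, ((if a = b then 1 else 0) + w b) := by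
        gcongr with b
        refine (abs_sub _ _).trans_eq ?_
        rw [abs_of_nonneg (by positivity), abs_of_nonneg (h₀ b)]
    _ ≤ 2 := by rw [sum_add_distrib, sum_ite_eq]; simp only [mem_univ, ↓reduceIte]; linarith

/-- With `w = softmax β x`, `a = φ''(F_β x)` and `b = β φ'(F_β x)` the summand is
`∂_j ∂_k (φ ∘ F_β) x`. -/
theorem sum_sum_abs_second_order_le (h₀ : ∀ i, 0 ≤ w i) (h₁ : ∑ i, w i ≤ 1)
    {a b A B : ℝ} (ha : |a| ≤ A) (hb : |b| ≤ B) :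
    ∑ j, ∑ k, |a * w j * w k + b * w k * ((if k = j then 1 else 0) - w j)| ≤ A + 2 * B := by
  have hA : 0 ≤ A := (abs_nonneg a).trans ha
  have hB : 0 ≤ B := (abs_nonneg b).trans hb
  have hterm : ∀ j k, |a * w j * w k + b * w k * ((if k = j then 1 else 0) - w j)|
      ≤ w k * (A * w j + B * |(if k = j then 1 else 0) - w j|) := fun j k => by
    have := h₀ j
    have := h₀ k
    rw [show a * w j * w k + b * w k * ((if k = j then 1 else 0) - w j)
        = w k * (a * w j + b * ((if k = j then 1 else 0) - w j)) by ring,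
      abs_mul, abs_of_nonneg (h₀ k)]
    gcongr
    refine (abs_add_le _ _).trans ?_
    rw [abs_mul, abs_mul, abs_of_nonneg (h₀ j)]
    gcongr
  rw [sum_comm]
  refine (sum_le_sum fun k _ => sum_le_sum fun j _ => hterm j k).trans ?_
  simp_rw [← mul_sum]
  refine sum_mul_le_of_le h₀ h₁ (by positivity) fun k => ?_
  rw [sum_add_distrib, ← mul_sum, ← mul_sum]
  have := sum_abs_ite_sub_le h₀ h₁ k
  nlinarith

theorem sum_sum_abs_mul_ite_sub_add_le (h₀ : ∀ i, 0 ≤ w i) (h₁ : ∑ i, w i ≤ 1) (l : ι) :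
    ∑ j, ∑ k, |w k * ((if l = j then 1 else 0) - w j) + w j * ((if l = k then 1 else 0) - w k)|
      ≤ 4 := by
  have hD := sum_abs_ite_sub_le h₀ h₁ l
  calc ∑ j, ∑ k, |w k * ((if l = j then 1 else 0) - w j) + w j * ((if l = k then 1 else 0) - w k)|
      ≤ ∑ j, ∑ k, (|(if l = j then 1 else 0) - w j| * w k
          + w j * |(if l = k then 1 else 0) - w k|) := by
        gcongr with j _ k
        refine (abs_add_le _ _).trans_eq ?_
        rw [abs_mul, abs_mul, abs_of_nonneg (h₀ j), abs_of_nonneg (h₀ k), mul_comm (w k)]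
    _ = (∑ j, |(if l = j then 1 else 0) - w j|) * ∑ k, w k
          + (∑ j, w j) * ∑ k, |(if l = k then 1 else 0) - w k| := by
        simp only [sum_mul_sum, sum_add_distrib]
    _ ≤ 2 * 1 + 1 * 2 := by
        have := sum_nonneg fun j (_ : j ∈ univ) => h₀ j
        gcongr
    _ = 4 := by norm_num

theorem sum_sum_abs_ite_sub_mul_ite_sub_le (h₀ : ∀ i, 0 ≤ w i) (h₁ : ∑ i, w i ≤ 1) (l : ι) :
    ∑ j, ∑ k, |((if l = j then 1 else 0) - w j) * ((if l = k then 1 else 0) - w k)| ≤ 4 := by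
  simp_rw [abs_mul, ← sum_mul_sum]
  have := sum_abs_ite_sub_le h₀ h₁ l
  have : 0 ≤ ∑ j, |(if l = j then 1 else 0) - w j| := sum_nonneg fun j _ => abs_nonneg _
  nlinarith

/-- `∂_j ∂_k ∂_l (φ ∘ F_β) x` is `w l` times this summand; grouping the `(k, j)`-term with
coefficient `a₂ - a₁ β` lets the second-order bound absorb it. -/
theorem sum_sum_abs_third_order_le (h₀ : ∀ i, 0 ≤ w i) (h₁ : ∑ i, w i ≤ 1)
    {a₁ a₂ a₃ B₁ B₂ B₃ β : ℝ} (hβ : 0 ≤ β)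
    (ha₁ : |a₁| ≤ B₁) (ha₂ : |a₂| ≤ B₂) (ha₃ : |a₃| ≤ B₃) (l : ι) :
    ∑ j, ∑ k, |a₃ * w j * w k + (a₂ - a₁ * β) * β * w k * ((if k = j then 1 else 0) - w j)
        + a₂ * β * (w k * ((if l = j then 1 else 0) - w j) + w j * ((if l = k then 1 else 0) - w k))
        + a₁ * β ^ 2 * (((if l = j then 1 else 0) - w j) * ((if l = k then 1 else 0) - w k))|
      ≤ B₃ + 6 * B₂ * β + 6 * B₁ * β ^ 2 := by
  have hb : |(a₂ - a₁ * β) * β| ≤ (B₂ + B₁ * β) * β := by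
    rw [abs_mul, abs_of_nonneg hβ]
    gcongr
    refine (abs_sub _ _).trans ?_
    rw [abs_mul, abs_of_nonneg hβ]
    gcongr
  have hX := sum_sum_abs_second_order_le h₀ h₁ ha₃ hb
  have hY := sum_sum_abs_mul_ite_sub_add_le h₀ h₁ l
  have hZ := sum_sum_abs_ite_sub_mul_ite_sub_le h₀ h₁ l
  have hc₂ : |a₂ * β| ≤ B₂ * β := by rw [abs_mul, abs_of_nonneg hβ]; gcongr
  have hc₁ : |a₁ * β ^ 2| ≤ B₁ * β ^ 2 := by rw [abs_mul, abs_of_nonneg (sq_nonneg β)]; gcongr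
  have hY' := mul_le_mul hc₂ hY (sum_nonneg fun _ _ => sum_nonneg fun _ _ => abs_nonneg _)
    ((abs_nonneg _).trans hc₂)
  have hZ' := mul_le_mul hc₁ hZ (sum_nonneg fun _ _ => sum_nonneg fun _ _ => abs_nonneg _)
    ((abs_nonneg _).trans hc₁)
  refine (sum_sum_abs_add_mul_add_mul_le _ _ _ _ _).trans ?_
  linarith

theorem sum_sum_sum_abs_third_order_le (h₀ : ∀ i, 0 ≤ w i) (h₁ : ∑ i, w i ≤ 1)
    {a₁ a₂ a₃ B₁ B₂ B₃ β : ℝ} (hβ : 0 ≤ β)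
    (ha₁ : |a₁| ≤ B₁) (ha₂ : |a₂| ≤ B₂) (ha₃ : |a₃| ≤ B₃) :
    ∑ j, ∑ k, ∑ l, |w l * (a₃ * w j * w k
        + (a₂ - a₁ * β) * β * w k * ((if k = j then 1 else 0) - w j)
        + a₂ * β * (w k * ((if l = j then 1 else 0) - w j) + w j * ((if l = k then 1 else 0) - w k))
        + a₁ * β ^ 2 * (((if l = j then 1 else 0) - w j) * ((if l = k then 1 else 0) - w k)))|
      ≤ B₃ + 6 * B₂ * β + 6 * B₁ * β ^ 2 := by
  have hB : 0 ≤ B₃ + 6 * B₂ * β + 6 * B₁ * β ^ 2 := by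
    have := (abs_nonneg _).trans ha₁
    have := (abs_nonneg _).trans ha₂
    have := (abs_nonneg _).trans ha₃
    positivity
  simp_rw [abs_mul, abs_of_nonneg (h₀ _)]
  rw [sum_congr rfl fun j _ => sum_comm, sum_comm]
  simp_rw [← mul_sum]
  exact sum_mul_le_of_le h₀ h₁ hB (sum_sum_abs_third_order_le h₀ h₁ hβ ha₁ ha₂ ha₃)

end SubProbability

section Derivatives

variable {β : ℝ}

theorem sum_exp_pos [Nonempty ι] (x : ι → ℝ) : 0 < ∑ j, exp (β * x j) :=
  sum_pos (fun _ _ => exp_pos _) univ_nonempty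

theorem softmax_nonneg (x : ι → ℝ) (k : ι) : 0 ≤ softmax β x k :=
  div_nonneg (exp_pos _).le (sum_nonneg fun _ _ => (exp_pos _).le)

theorem sum_softmax_le_one (x : ι → ℝ) : ∑ k, softmax β x k ≤ 1 := by
  simp only [softmax, ← sum_div]
  exact div_self_le_one _

theorem softmax_eq_exp [Nonempty ι] (x : ι → ℝ) (k : ι) :
    softmax β x k = exp (β * x k - log (∑ j, exp (β * x j))) := by
  rw [exp_sub, exp_log (sum_exp_pos x), softmax]

theorem hasFDerivAt_sum_exp (x : ι → ℝ) :
    HasFDerivAt (fun y : ι → ℝ => ∑ j, exp (β * y j))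
      (∑ j, exp (β * x j) • β • (ContinuousLinearMap.proj j : (ι → ℝ) →L[ℝ] ℝ)) x :=
  HasFDerivAt.fun_sum fun j _ =>
    (hasDerivAt_exp _).comp_hasFDerivAt x ((hasFDerivAt_apply j x).const_mul β)

theorem differentiable_log_sum_exp [Nonempty ι] :
    Differentiable ℝ fun y : ι → ℝ => log (∑ j, exp (β * y j)) :=
  fun x => ((hasFDerivAt_sum_exp x).log (sum_exp_pos x).ne').differentiableAt

theorem differentiable_logSumExp [Nonempty ι] : Differentiable ℝ (logSumExp (ι := ι) β) :=
  differentiable_log_sum_exp.const_mul _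

theorem differentiable_softmax [Nonempty ι] : Differentiable ℝ (softmax (ι := ι) β) := by
  refine differentiable_pi.2 fun k => ?_
  simp_rw [softmax_eq_exp]
  exact (((differentiable_apply k).const_mul β).sub differentiable_log_sum_exp).exp

variable [DecidableEq ι]

theorem fderiv_log_sum_exp_apply (x : ι → ℝ) (j : ι) :
    fderiv ℝ (fun y : ι → ℝ => log (∑ j, exp (β * y j))) x (Pi.single j 1)
      = β * softmax β x j := by
  have : Nonempty ι := ⟨j⟩
  rw [((hasFDerivAt_sum_exp x).log (sum_exp_pos x).ne').fderiv]
  simp [softmax, Pi.single_apply]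
  field_simp

theorem fderiv_logSumExp_apply (hβ : β ≠ 0) (x : ι → ℝ) (j : ι) :
    fderiv ℝ (logSumExp β) x (Pi.single j 1) = softmax β x j := by
  have : Nonempty ι := ⟨j⟩
  rw [show logSumExp β = fun y : ι → ℝ => β⁻¹ * log (∑ j, exp (β * y j)) from rfl,
    fderiv_const_mul differentiable_log_sum_exp.differentiableAt]
  simp [fderiv_log_sum_exp_apply, hβ]

theorem fderiv_softmax_apply (x : ι → ℝ) (j k : ι) :
    fderiv ℝ (softmax β · k) x (Pi.single j 1)
      = β * softmax β x k * ((if k = j then 1 else 0) - softmax β x j) := by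
  have : Nonempty ι := ⟨j⟩
  have hd : DifferentiableAt ℝ (fun y : ι → ℝ => β * y k - log (∑ j, exp (β * y j))) x :=
    ((differentiableAt_apply k x).const_mul β).fun_sub (differentiable_log_sum_exp x)
  rw [funext (softmax_eq_exp (β := β) · k), fderiv_exp hd,
    fderiv_fun_sub (by fun_prop) (differentiable_log_sum_exp _)]
  simp [fderiv_log_sum_exp_apply, ((hasFDerivAt_apply (𝕜 := ℝ) k x).const_mul β).fderiv,
    Pi.single_apply, ← softmax_eq_exp]
  split_ifs <;> ring

variable {φ : ℝ → ℝ}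

theorem fderiv_comp_logSumExp_apply (hβ : β ≠ 0) (hφ : Differentiable ℝ φ)
    (x : ι → ℝ) (j : ι) :
    fderiv ℝ (fun y => φ (logSumExp β y)) x (Pi.single j 1)
      = deriv φ (logSumExp β x) * softmax β x j := by
  have : Nonempty ι := ⟨j⟩
  rw [fderiv_fun_comp x (hφ _) (differentiable_logSumExp x)]
  simp [fderiv_logSumExp_apply hβ, mul_comm]

theorem fderiv_fderiv_comp_logSumExp_apply (hβ : β ≠ 0) (hφ : Differentiable ℝ φ)
    (hφ' : Differentiable ℝ (deriv φ)) (x : ι → ℝ) (j k : ι) :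
    fderiv ℝ (fun y => fderiv ℝ (fun z => φ (logSumExp β z)) y (Pi.single k 1)) x
        (Pi.single j 1)
      = deriv (deriv φ) (logSumExp β x) * softmax β x j * softmax β x k
        + deriv φ (logSumExp β x) * β * softmax β x k
          * ((if k = j then 1 else 0) - softmax β x j) := by
  have : Nonempty ι := ⟨j⟩
  have hF : Differentiable ℝ (logSumExp (ι := ι) β) := differentiable_logSumExp
  have hπ : Differentiable ℝ (softmax (ι := ι) β) := differentiable_softmax
  simp_rw [fderiv_comp_logSumExp_apply hβ hφ]
  rw [fderiv_fun_mul (by fun_prop) (by fun_prop)]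
  simp [fderiv_comp_logSumExp_apply hβ hφ', fderiv_softmax_apply]
  ring

theorem fderiv_fderiv_fderiv_comp_logSumExp_apply (hβ : β ≠ 0) (hφ : Differentiable ℝ φ)
    (hφ' : Differentiable ℝ (deriv φ)) (hφ'' : Differentiable ℝ (deriv (deriv φ)))
    (x : ι → ℝ) (j k l : ι) :
    fderiv ℝ (fun y => fderiv ℝ (fun z => fderiv ℝ (fun w => φ (logSumExp β w)) z
        (Pi.single l 1)) y (Pi.single k 1)) x (Pi.single j 1)
      = softmax β x l * (deriv (deriv (deriv φ)) (logSumExp β x) * softmax β x j * softmax β x k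
        + (deriv (deriv φ) (logSumExp β x) - deriv φ (logSumExp β x) * β) * β * softmax β x k
          * ((if k = j then 1 else 0) - softmax β x j)
        + deriv (deriv φ) (logSumExp β x) * β
          * (softmax β x k * ((if l = j then 1 else 0) - softmax β x j)
            + softmax β x j * ((if l = k then 1 else 0) - softmax β x k))
        + deriv φ (logSumExp β x) * β ^ 2
          * (((if l = j then 1 else 0) - softmax β x j)
            * ((if l = k then 1 else 0) - softmax β x k))) := by
  have : Nonempty ι := ⟨j⟩
  have hF : Differentiable ℝ (logSumExp (ι := ι) β) := differentiable_logSumExp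
  have hπ : Differentiable ℝ (softmax (ι := ι) β) := differentiable_softmax
  simp_rw [fderiv_fderiv_comp_logSumExp_apply hβ hφ hφ']
  simp (disch := fun_prop) only [fderiv_fun_add, fderiv_fun_mul, fderiv_const_sub]
  simp [fderiv_comp_logSumExp_apply hβ hφ', fderiv_comp_logSumExp_apply hβ hφ'',
    fderiv_softmax_apply]
  ring

end Derivatives

end

theorem sum_abs_partial_derivs_comp_logSumExp_general
    (p : ℕ) (β : ℝ) (hβ : 0 < β)
    (g : ℝ → ℝ) (hg : ContDiff ℝ 3 g)
    (B₁ B₂ B₃ : ℝ)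
    (hB₁ : ∀ t : ℝ, |deriv g t| ≤ B₁)
    (hB₂ : ∀ t : ℝ, |deriv (deriv g) t| ≤ B₂)
    (hB₃ : ∀ t : ℝ, |deriv (deriv (deriv g)) t| ≤ B₃)
    (f : (Fin p → ℝ) → ℝ)
    (hf : ∀ x, f x = g (β⁻¹ * Real.log (∑ j, Real.exp (β * x j))))
    (x : Fin p → ℝ) :
    (∑ j, ∑ k,
        |fderiv ℝ (fun y => fderiv ℝ f y (Pi.single k 1)) x (Pi.single j 1)|
      ≤ B₂ + 2 * B₁ * β) ∧
    (∑ j, ∑ k, ∑ l,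
        |fderiv ℝ (fun y =>
            fderiv ℝ (fun z => fderiv ℝ f z (Pi.single l 1)) y (Pi.single k 1)) x
          (Pi.single j 1)|
      ≤ B₃ + 6 * B₂ * β + 6 * B₁ * β ^ 2) := by
  have hg₁ : Differentiable ℝ g := hg.differentiable (by norm_num)
  have hg₂ : Differentiable ℝ (deriv g) := by
    simpa using hg.differentiable_iteratedDeriv 1 (by norm_num)
  have hg₃ : Differentiable ℝ (deriv (deriv g)) := by
    simpa [iteratedDeriv_succ] using hg.differentiable_iteratedDeriv 2 (by norm_num)
  obtain rfl : f = fun y => g (logSumExp β y) := funext hf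
  have h₀ := softmax_nonneg (β := β) x
  have h₁ := sum_softmax_le_one (β := β) x
  refine ⟨?_, ?_⟩
  · simp_rw [fderiv_fderiv_comp_logSumExp_apply hβ.ne' hg₁ hg₂]
    have hb : |deriv g (logSumExp β x) * β| ≤ B₁ * β := by
      rw [abs_mul, abs_of_pos hβ]
      exact mul_le_mul_of_nonneg_right (hB₁ _) hβ.le
    exact (sum_sum_abs_second_order_le h₀ h₁ (hB₂ _) hb).trans_eq (by ring)
  · simp_rw [fderiv_fderiv_fderiv_comp_logSumExp_apply hβ.ne' hg₁ hg₂ hg₃]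
    exact sum_sum_sum_abs_third_order_le h₀ h₁ hβ.le (hB₁ _) (hB₂ _) (hB₃ _)

/-- Bounds on the sums of second and third partial derivatives of `g ∘ F_β`, where
`F_β(x) = β⁻¹ log (∑_j e^{β x_j})` and `g ∈ C³(ℝ)` has bounded derivatives. -/
theorem sum_abs_partial_derivs_comp_logSumExp
    (p : ℕ) (hp : 1 ≤ p) (β : ℝ) (hβ : 0 < β)
    (g : ℝ → ℝ) (hg : ContDiff ℝ 3 g)
    (B₁ B₂ B₃ : ℝ)
    (hB₁ : ∀ t : ℝ, |deriv g t| ≤ B₁)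
    (hB₂ : ∀ t : ℝ, |deriv (deriv g) t| ≤ B₂)
    (hB₃ : ∀ t : ℝ, |deriv (deriv (deriv g)) t| ≤ B₃)
    (f : (Fin p → ℝ) → ℝ)
    (hf : ∀ x, f x = g (β⁻¹ * Real.log (∑ j, Real.exp (β * x j))))
    (x : Fin p → ℝ) :
    (∑ j, ∑ k,
        |fderiv ℝ (fun y => fderiv ℝ f y (Pi.single k 1)) x (Pi.single j 1)|
      ≤ B₂ + 2 * B₁ * β) ∧
    (∑ j, ∑ k, ∑ l,
        |fderiv ℝ (fun y =>
            fderiv ℝ (fun z => fderiv ℝ f z (Pi.single l 1)) y (Pi.single k 1)) x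
          (Pi.single j 1)|
      ≤ B₃ + 6 * B₂ * β + 6 * B₁ * β ^ 2) :=
  sum_abs_partial_derivs_comp_logSumExp_general p β hβ g hg B₁ B₂ B₃ hB₁ hB₂ hB₃ f hf x
end

section
/- Entropy integral bound for VC type classes: if sup_Q N(ℱ, e_Q, ε‖F‖_{Q,2}) ≤ (A/ε)^v for all 0 < ε ≤ 1, with A ≥ e and v ≥ 1, then the uniform entropy integral satisfies J(δ) = ∫₀^δ √(1 + v log(A/ε)) dε ≤ 2√(2v) · δ · √(log(A/δ)) for every 0 < δ ≤ 1. -/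
open Real MeasureTheory

/-- Entropy integral bound for VC type classes: for `A ≥ e`, `v ≥ 1` and `0 < δ ≤ 1`,
`∫₀^δ √(1 + v log(A/ε)) dε ≤ 2√(2v) δ √(log(A/δ))`. -/
theorem vc_entropy_integral_bound (A v δ : ℝ)
    (hA : Real.exp 1 ≤ A) (hv : 1 ≤ v) (hδ : 0 < δ) (hδ1 : δ ≤ 1) :
    ∫ ε in Set.Ioc (0 : ℝ) δ, Real.sqrt (1 + v * Real.log (A / ε)) ≤
      2 * Real.sqrt (2 * v) * δ * Real.sqrt (Real.log (A / δ)) := by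
  have hA0 : (0:ℝ) < A := lt_of_lt_of_le (Real.exp_pos 1) hA
  have hv0 : (0:ℝ) < v := lt_of_lt_of_le one_pos hv
  have hlogA : 1 ≤ Real.log A := by
    rw [← Real.log_exp 1]
    exact Real.log_le_log (Real.exp_pos 1) hA
  set f : ℝ → ℝ := fun ε => Real.sqrt (1 + v * Real.log (A / ε)) with hfdef
  have hL : ∀ x : ℝ, 0 < x → x ≤ δ → 1 ≤ Real.log A - Real.log x := by
    intro x hx hxδ
    have hlx : Real.log x ≤ 0 := Real.log_nonpos (le_of_lt hx) (le_trans hxδ hδ1)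
    linarith
  set C : ℝ := 2 * Real.sqrt (2 * v) * δ * Real.sqrt (Real.log (A / δ)) with hCdef
  have hC0 : 0 ≤ C := by positivity
  have key : ∀ η : ℝ, 0 < η → η ≤ δ → ∫ x in Set.Ioc η δ, f x ≤ C := by
    intro η hη hηδ
    set u : ℝ → ℝ := fun x => Real.log A - Real.log x with hudef
    set H : ℝ → ℝ := fun x => 2 * Real.sqrt (2 * v) * (x * Real.sqrt (u x)) with hHdef
    set h : ℝ → ℝ := fun x =>
      2 * Real.sqrt (2 * v) * (1 * Real.sqrt (u x) + x * (-x⁻¹ / (2 * Real.sqrt (u x)))) with hhdef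
    have hmem : ∀ x ∈ Set.Icc η δ, 0 < x ∧ 1 ≤ u x := by
      intro x hx
      exact ⟨lt_of_lt_of_le hη hx.1, hL x (lt_of_lt_of_le hη hx.1) hx.2⟩
    have hderiv : ∀ x ∈ Set.uIcc η δ, HasDerivAt H (h x) x := by
      intro x hx
      rw [Set.uIcc_of_le hηδ] at hx
      obtain ⟨hx0, hu1⟩ := hmem x hx
      have hu0 : u x ≠ 0 := by dsimp [u] at hu1 ⊢; intro hc; rw [hc] at hu1; linarith
      have d1 : HasDerivAt u (-x⁻¹) x := by
        simpa using (Real.hasDerivAt_log (ne_of_gt hx0)).const_sub (Real.log A)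
      have d2 := d1.sqrt hu0
      have d3 := (hasDerivAt_id x).mul d2
      exact d3.const_mul _
    have hhcont : ContinuousOn h (Set.uIcc η δ) := by
      rw [Set.uIcc_of_le hηδ]
      intro x hx
      obtain ⟨hx0, hu1⟩ := hmem x hx
      have hsq : Real.sqrt (u x) ≠ 0 := by
        have : (0:ℝ) < Real.sqrt (u x) := Real.sqrt_pos.2 (by linarith)
        exact ne_of_gt this
      have hucont : ContinuousAt u x :=
        continuousAt_const.sub (Real.continuousAt_log (ne_of_gt hx0))
      have hscont : ContinuousAt (fun y => Real.sqrt (u y)) x :=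
        Real.continuous_sqrt.continuousAt.comp hucont
      apply ContinuousAt.continuousWithinAt
      apply continuousAt_const.mul
      apply ContinuousAt.add (continuousAt_const.mul hscont)
      apply continuousAt_id.mul
      apply ContinuousAt.div
      · exact (continuousAt_id.inv₀ (ne_of_gt hx0)).neg
      · exact continuousAt_const.mul hscont
      · simpa using hsq
    have hfcont : ContinuousOn f (Set.uIcc η δ) := by
      rw [Set.uIcc_of_le hηδ]
      intro x hx
      obtain ⟨hx0, _⟩ := hmem x hx
      apply ContinuousAt.continuousWithinAt
      apply Real.continuous_sqrt.continuousAt.comp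
      apply continuousAt_const.add
      apply continuousAt_const.mul
      exact (Real.continuousAt_log (by positivity)).comp (continuousAt_const.div continuousAt_id (ne_of_gt hx0))
    have hfle : ∀ x ∈ Set.Icc η δ, f x ≤ h x := by
      intro x hx
      obtain ⟨hx0, hu1⟩ := hmem x hx
      have hrw : Real.log (A / x) = u x := Real.log_div (ne_of_gt hA0) (ne_of_gt hx0)
      have step1 : f x ≤ Real.sqrt (2 * v) * Real.sqrt (u x) := by
        dsimp [f]
        rw [hrw, ← Real.sqrt_mul (by positivity) (u x)]
        apply Real.sqrt_le_sqrt
        nlinarith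
      refine le_trans step1 ?_
      dsimp [h]
      set s := Real.sqrt (u x) with hsdef
      have hs1 : 1 ≤ s := by
        rw [hsdef]
        rw [show (1:ℝ) = Real.sqrt 1 from (Real.sqrt_one).symm]
        exact Real.sqrt_le_sqrt hu1
      have hs0 : 0 < s := lt_of_lt_of_le one_pos hs1
      have hxinv : x * -x⁻¹ = -1 := by field_simp
      have hw0 : 0 ≤ Real.sqrt (2 * v) := Real.sqrt_nonneg _
      have heq : x * (-x⁻¹ / (2 * s)) = -(1 / (2 * s)) := by
        rw [mul_div_assoc' x _ _, hxinv]; ring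
      rw [heq]
      have h1s : 1 / s ≤ s := by
        rw [div_le_iff₀ hs0]; nlinarith
      have : 1 * s + -(1 / (2 * s)) ≥ s / 2 := by
        have : 1 / (2 * s) ≤ s / 2 := by
          rw [div_le_div_iff₀ (by positivity) (by norm_num)]
          nlinarith
        linarith
      nlinarith [mul_le_mul_of_nonneg_left this hw0]
    have hfint : IntervalIntegrable f volume η δ := hfcont.intervalIntegrable
    have hhint : IntervalIntegrable h volume η δ := hhcont.intervalIntegrable
    have hftc : ∫ x in η..δ, h x = H δ - H η :=
      intervalIntegral.integral_eq_sub_of_hasDerivAt hderiv hhint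
    have hmono : ∫ x in η..δ, f x ≤ ∫ x in η..δ, h x :=
      intervalIntegral.integral_mono_on hηδ hfint hhint hfle
    have hHη : 0 ≤ H η := by
      dsimp [H]; positivity
    have hHδ : H δ = C := by
      dsimp [H, u, C]
      rw [Real.log_div (ne_of_gt hA0) (ne_of_gt hδ)]
      ring
    calc ∫ x in Set.Ioc η δ, f x = ∫ x in η..δ, f x :=
          (intervalIntegral.integral_of_le hηδ).symm
      _ ≤ ∫ x in η..δ, h x := hmono
      _ = H δ - H η := hftc
      _ ≤ H δ := by linarith
      _ = C := hHδ
  -- now limit η → 0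
  by_cases hint : IntegrableOn f (Set.Ioc (0:ℝ) δ) volume
  · set s : ℕ → Set ℝ := fun n => Set.Ioc (δ / (n + 1)) δ with hsdef
    have hsm : ∀ n, MeasurableSet (s n) := fun n => measurableSet_Ioc
    have hmono : Monotone s := by
      intro n m hnm
      apply Set.Ioc_subset_Ioc_left
      have hc : ((n:ℝ)+1) ≤ (m:ℝ)+1 := by exact_mod_cast Nat.succ_le_succ hnm
      exact div_le_div_of_nonneg_left (le_of_lt hδ) (by positivity) hc
    have hunion : (⋃ n, s n) = Set.Ioc (0:ℝ) δ := by
      ext x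
      simp only [Set.mem_iUnion, Set.mem_Ioc]
      constructor
      · rintro ⟨n, h1, h2⟩
        exact ⟨lt_trans (by positivity) h1, h2⟩
      · rintro ⟨hx0, hxδ⟩
        obtain ⟨n, hn⟩ := exists_nat_gt (δ / x)
        refine ⟨n, ?_, hxδ⟩
        rw [div_lt_iff₀ (by positivity)]
        rw [div_lt_iff₀ hx0] at hn
        nlinarith
    have htend := MeasureTheory.tendsto_setIntegral_of_monotone hsm hmono (hunion ▸ hint)
    rw [hunion] at htend
    apply le_of_tendsto htend
    filter_upwards with n
    apply key
    · positivity
    · rw [div_le_iff₀ (by positivity)]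
      nlinarith [Nat.cast_nonneg (α := ℝ) n]
  · rw [MeasureTheory.integral_undef ?_]
    · exact hC0
    · exact fun hc => hint hc
end
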